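/- arXiv:math/0207117 — 6 statements merged into one kernel-verified Lean document; each statement's English description precedes it below -/
import Mathlib

section
/- In the Griess algebra G, the set of elements X satisfying X·X = 2X and ⟨X,X⟩ = 1/4 is exactly {e, f, f'}. (That is, there are exactly three conformal vectors with central charge 1/2 in the weight-two subspace of the VOA U, namely e, f and f'.) -/
noncomputable section

/-- The underlying space of the Griess algebra `G` of the VOA `U`:
coordinates with respect to the basis `{e, a, b, c}`. -/
abbrev G : Type := Fin 4 → ℝ

/-- The (commutative, nonassociative) product of the Griess algebra `G`,
determined by the multiplication table on the basis `{e, a, b, c}`. -/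
def gmul (X Y : G) : G :=
  ![2 * X 0 * Y 0 + (3 ^ 7 / 2 ^ 15) * X 2 * Y 2 + (3 ^ 5 / 2 ^ 13) * X 3 * Y 3,
    (105 / 2 ^ 7) * X 1 * Y 1 + (3 ^ 3 / 2 ^ 7) * X 2 * Y 2 + (31 / 2 ^ 5) * X 3 * Y 3,
    (1 / 2) * (X 0 * Y 2 + X 2 * Y 0) + (3 ^ 2 * 5 * 7 / 2 ^ 9) * (X 1 * Y 2 + X 2 * Y 1)
      + (23 / 2 ^ 5) * X 3 * Y 3,
    (1 / 16) * (X 0 * Y 3 + X 3 * Y 0) + (31 * 105 / 2 ^ 12) * (X 1 * Y 3 + X 3 * Y 1)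
      + (3 ^ 2 * 23 / 2 ^ 10) * (X 2 * Y 3 + X 3 * Y 2)]

/-- The symmetric invariant bilinear form of the Griess algebra `G`,
for which the basis `{e, a, b, c}` is orthogonal. -/
def form (X Y : G) : ℝ :=
  (1 / 4) * X 0 * Y 0 + (3 ^ 6 * 5 * 7 / 2 ^ 18) * X 1 * Y 1
    + (3 ^ 7 / 2 ^ 16) * X 2 * Y 2 + (3 ^ 5 / 2 ^ 11) * X 3 * Y 3

def e : G := ![1, 0, 0, 0]
def a : G := ![0, 1, 0, 0]
def b : G := ![0, 0, 1, 0]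
def c : G := ![0, 0, 0, 1]

/-- The Virasoro vector `ω = e + (2^8/105) a`. -/
def ω : G := e + (2 ^ 8 / 105 : ℝ) • a

/-- The conformal vector `f = (13/2^8) e + a + b + c`. -/
def f : G := (13 / 2 ^ 8 : ℝ) • e + a + b + c

/-- The conformal vector `f' = (13/2^8) e + a + b - c`. -/
def f' : G := (13 / 2 ^ 8 : ℝ) • e + a + b - c

set_option maxHeartbeats 2000000 in
/-- There are exactly three conformal vectors with central charge 1/2 in the
Griess algebra of the VOA `U`, namely `e`, `f` and `f'`. -/
theorem conformal_vectors_central_charge_half :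
    {X : G | gmul X X = (2 : ℝ) • X ∧ form X X = 1 / 4} = {e, f, f'} := by
  ext X
  simp only [Set.mem_setOf_eq, Set.mem_insert_iff, Set.mem_singleton_iff]
  constructor
  · rintro ⟨hmul, hform⟩
    have h0 := congr_fun hmul 0
    have h1 := congr_fun hmul 1
    have h2 := congr_fun hmul 2
    have h3 := congr_fun hmul 3
    simp only [gmul, Matrix.cons_val_zero, Matrix.cons_val_one, Matrix.head_cons,
      Matrix.cons_val_two, Matrix.tail_cons, Matrix.cons_val_three, Pi.smul_apply,
      smul_eq_mul] at h0 h1 h2 h3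
    have h4 := hform
    simp only [form] at h4
    set x := X 0 with hxdef
    set y := X 1 with hydef
    set z := X 2 with hzdef
    set w := X 3 with hwdef
    have hy : y = z := by
      linear_combination ((2240/5589 : ℝ) + (11919/62560 : ℝ)*w*w + (-48683/89930 : ℝ)*z + (20436483/46044160 : ℝ)*z*w*w + (-351/7360 : ℝ)*z*z + (9192933/92088320 : ℝ)*z*z*z + (-35/92 : ℝ)*y + (1171251/2877760 : ℝ)*y*z + (-2457/47104 : ℝ)*y*z*z + (2240/5589 : ℝ)*x) * h0 + ((-81/92 : ℝ) + (-4818051/16015360 : ℝ)*w*w + (9179343/23022080 : ℝ)*z + (4966065369/11787304960 : ℝ)*z*w*w + (-22113/376832 : ℝ)*z*z + (2233882719/23574609920 : ℝ)*z*z*z + (-8505/23552 : ℝ)*y + (5103/16384 : ℝ)*y*z + (-597051/12058624 : ℝ)*y*z*z + (35/92 : ℝ)*x + (340479/1438880 : ℝ)*x*z) * h1 + ((13749/44965 : ℝ) + (711/1088 : ℝ)*w*w + (-507/3680 : ℝ)*z + (27578799/184176640 : ℝ)*z*z + (169107/1438880 : ℝ)*y + (-7371/94208 : ℝ)*y*z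 + (31216/44965 : ℝ)*x + (-39/1840 : ℝ)*x*z + (-113493/719440 : ℝ)*x*y) * h2 + ((-457/3910 : ℝ)*w + (-81/14720 : ℝ)*z*w + (125217/500480 : ℝ)*y*w + (101/1955 : ℝ)*x*w) * h3 + ((-31/20 : ℝ)*w*w + (69868/44965 : ℝ)*z + (-20436483/5755520 : ℝ)*z*w*w + (429/920 : ℝ)*z*z + (-9192933/11511040 : ℝ)*z*z*z + (70/23 : ℝ)*y + (-21/8 : ℝ)*y*z + (2457/5888 : ℝ)*y*z*z + (-17920/5589 : ℝ)*x) * h4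
    have hx : x = 1 - (243/256 : ℝ) * z := by
      linear_combination ((-81/92 : ℝ) + (-2896317/16015360 : ℝ)*w*w + (11829969/23022080 : ℝ)*z + (-4966065369/11787304960 : ℝ)*z*w*w + (85293/1884160 : ℝ)*z*z + (-2233882719/23574609920 : ℝ)*z*z*z + (8505/23552 : ℝ)*y + (-284613993/736706560 : ℝ)*y*z + (597051/12058624 : ℝ)*y*z*z + (-35/92 : ℝ)*x) * h0 + ((8505/23552 : ℝ) + (1170786393/4099932160 : ℝ)*w*w + (-2230580349/5893652480 : ℝ)*z + (-1206753884667/3017550069760 : ℝ)*z*w*w + (5373459/96468992 : ℝ)*z*z + (-542833500717/6035100139520 : ℝ)*z*z*z + (2066715/6029312 : ℝ)*y + (-1240029/4194304 : ℝ)*y*z + (145083393/3087007744 : ℝ)*y*z*z + (-8505/23552 : ℝ)*x + (-82736397/368353280 : ℝ)*x*z) * h1 + ((-3341007/11511040 : ℝ) + (-172773/278528 : ℝ)*w*w + (123201/942080 : ℝ)*z + (-6701648157/47149219840 : ℝ)*z*z + (-41093001/368353280 : ℝ)*y + (1791153/24117248 : ℝ)*y*z + (-474093/719440 : ℝ)*x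 + (9477/471040 : ℝ)*x*z + (27578799/184176640 : ℝ)*x*y) * h2 + ((111051/1000960 : ℝ)*w + (19683/3768320 : ℝ)*z*w + (-30427731/128122880 : ℝ)*y*w + (-24543/500480 : ℝ)*x*w) * h3 + ((4/1 : ℝ) + (7533/5120 : ℝ)*w*w + (-4244481/2877760 : ℝ)*z + (4966065369/1473413120 : ℝ)*z*w*w + (-104247/235520 : ℝ)*z*z + (2233882719/2946826240 : ℝ)*z*z*z + (-8505/2944 : ℝ)*y + (5103/2048 : ℝ)*y*z + (-597051/1507328 : ℝ)*y*z*z + (70/23 : ℝ)*x) * h4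
    have hz : z * z = z := by
      linear_combination ((13417/16320 : ℝ)*w*w + (-15627/3910 : ℝ)*z + (341873/150144 : ℝ)*z*w*w + (-3/10 : ℝ)*z*z + (25515/50048 : ℝ)*z*z*z + (18291/25024 : ℝ)*y*z + (-21/64 : ℝ)*y*z*z) * h0 + ((-475307/278528 : ℝ)*w*w + (104139/200192 : ℝ)*z + (27691713/12812288 : ℝ)*z*w*w + (-189/512 : ℝ)*z*z + (6200145/12812288 : ℝ)*z*z*z + (5103/16384 : ℝ)*y*z + (-5103/16384 : ℝ)*y*z*z + (945/782 : ℝ)*x*z) * h1 + ((-11717/5865 : ℝ) + (6753583/2001920 : ℝ)*w*w + (-13/15 : ℝ)*z + (76545/100096 : ℝ)*z*z + (-71127/50048 : ℝ)*y + (-63/128 : ℝ)*y*z + (17582/5865 : ℝ)*x + (-2/15 : ℝ)*x*z + (-315/391 : ℝ)*x*y) * h2 + ((41/340 : ℝ)*w + (-81/14720 : ℝ)*z*w + (5621/4352 : ℝ)*y*w + (67/255 : ℝ)*x*w) * h3 + ((-161/24 : ℝ)*w*w + (117196/5865 : ℝ)*z + (-341873/18768 : ℝ)*z*w*w + (44/15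 : ℝ)*z*z + (-25515/6256 : ℝ)*z*z*z + (-21/8 : ℝ)*y*z + (21/8 : ℝ)*y*z*z) * h4
    have hw2 : w * w = z := by
      linear_combination ((387/5440 : ℝ)*w*w + (19/170 : ℝ)*z + (24363/250240 : ℝ)*z*w*w + (243/10880 : ℝ)*z*z*z + (1881/5440 : ℝ)*y*z) * h0 + ((-48951/1392640 : ℝ)*w*w + (16353/43520 : ℝ)*z + (5920209/64061440 : ℝ)*z*w*w + (59049/2785280 : ℝ)*z*z*z + (5103/16384 : ℝ)*y*z + (9/170 : ℝ)*x*z) * h1 + ((63/85 : ℝ) + (278991/2001920 : ℝ)*w*w + (729/21760 : ℝ)*z*z + (4443/10880 : ℝ)*y + (22/85 : ℝ)*x + (-3/85 : ℝ)*x*y) * h2 + ((-11/68 : ℝ)*w + (-81/14720 : ℝ)*z*w + (1161/21760 : ℝ)*y*w + (1/85 : ℝ)*x*w) * h3 + ((-23/40 : ℝ)*w*w + (-164/85 : ℝ)*z + (-24363/31280 : ℝ)*z*w*w + (-243/1360 : ℝ)*z*z*z + (-21/8 : ℝ)*y*z) * h4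
    have hzz : z = 0 ∨ z = 1 := by
      rcases mul_eq_zero.mp (show z * (z - 1) = 0 by ring_nf; linarith [hz]) with h | h
      · exact Or.inl h
      · exact Or.inr (by linarith)
    rcases hzz with hz0 | hz1
    · left
      have hw : w = 0 := by
        have : w * w = 0 := by rw [hw2, hz0]
        exact mul_self_eq_zero.mp this
      funext i
      fin_cases i <;>
        simp only [e, Matrix.cons_val_zero, Matrix.cons_val_one, Matrix.head_cons,
          Matrix.cons_val_two, Matrix.tail_cons, Matrix.cons_val_three] <;>
        first
          | (show x = 1; rw [hx, hz0]; ring)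
          | (show y = 0; rw [hy, hz0])
          | (show z = 0; exact hz0)
          | (show w = 0; exact hw)
    · have hw : w = 1 ∨ w = -1 := by
        have h : (w - 1) * (w + 1) = 0 := by
          have : w * w = 1 := by rw [hw2, hz1]
          nlinarith [this]
        rcases mul_eq_zero.mp h with h | h
        · exact Or.inl (by linarith)
        · exact Or.inr (by linarith)
      have hxv : x = 13 / 256 := by rw [hx, hz1]; norm_num
      have hyv : y = 1 := by rw [hy, hz1]
      rcases hw with hw | hw
      · right; left
        funext i
        fin_cases i <;>
          simp only [f, e, a, b, c, Pi.add_apply, Pi.smul_apply, smul_eq_mul,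
            Matrix.cons_val_zero, Matrix.cons_val_one, Matrix.head_cons,
            Matrix.cons_val_two, Matrix.tail_cons, Matrix.cons_val_three]
        · show x = 13 / 2 ^ 8 * 1 + 0 + 0 + 0; rw [hxv]; norm_num
        · show y = 13 / 2 ^ 8 * 0 + 1 + 0 + 0; rw [hyv]; norm_num
        · show z = 13 / 2 ^ 8 * 0 + 0 + 1 + 0; rw [hz1]; norm_num
        · show w = 13 / 2 ^ 8 * 0 + 0 + 0 + 1; rw [hw]; norm_num
      · right; right
        funext i
        fin_cases i <;>
          simp only [f', e, a, b, c, Pi.sub_apply, Pi.add_apply, Pi.smul_apply, smul_eq_mul,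
            Matrix.cons_val_zero, Matrix.cons_val_one, Matrix.head_cons,
            Matrix.cons_val_two, Matrix.tail_cons, Matrix.cons_val_three]
        · show x = 13 / 2 ^ 8 * 1 + 0 + 0 - 0; rw [hxv]; norm_num
        · show y = 13 / 2 ^ 8 * 0 + 1 + 0 - 0; rw [hyv]; norm_num
        · show z = 13 / 2 ^ 8 * 0 + 0 + 1 - 0; rw [hz1]; norm_num
        · show w = 13 / 2 ^ 8 * 0 + 0 + 0 - 1; rw [hw]; norm_num
  · intro h
    rcases h with h | h | h <;> subst h <;> constructor <;>
      first
        | (funext i; fin_cases i <;>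
            (simp only [gmul, e, f, f', a, b, c, form, Pi.add_apply, Pi.sub_apply,
              Pi.smul_apply, smul_eq_mul, Matrix.cons_val_zero, Matrix.cons_val_one,
              Matrix.head_cons, Matrix.cons_val_two, Matrix.tail_cons,
              Matrix.cons_val_three] <;> norm_num))
        | (simp only [gmul, e, f, f', a, b, c, form, Pi.add_apply, Pi.sub_apply,
            Pi.smul_apply, smul_eq_mul, Matrix.cons_val_zero, Matrix.cons_val_one,
            Matrix.head_cons, Matrix.cons_val_two, Matrix.tail_cons,
            Matrix.cons_val_three] <;> norm_num)
end
end

section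
/- In the Griess algebra G, the set of all nonzero elements X with X·X = 2X consists of exactly the following 15 elements, written as αω + βe + γf + δf' with coordinates (α,β,γ,δ): (0,1,0,0), (0,0,1,0), (0,0,0,1); (1,−1,0,0), (1,0,−1,0), (1,0,0,−1); (1,0,0,0); (14/9,−32/27,−32/27,−32/27), (−7/18,14/27,32/27,32/27), (−7/18,32/27,14/27,32/27), (−7/18,32/27,32/27,14/27); (−5/9,32/27,32/27,32/27), (25/18,−14/27,−32/27,−32/27), (25/18,−32/27,−14/27,−32/27), (25/18,−32/27,−32/27,−14/27). -/
noncomputable section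

/-- The element `α ω + β e + γ f + δ f'` of the Griess algebra. -/
def cv (α β γ δ : ℝ) : G := α • ω + β • e + γ • f + δ • f'


lemma cv_eq (α β γ δ : ℝ) :
    cv α β γ δ = ![α + β + (γ + δ) * (13 / 256), α * (256 / 105) + γ + δ, γ + δ, γ - δ] := by
  funext i
  fin_cases i <;>
    simp only [cv, ω, e, a, b, c, f, f', Pi.add_apply, Pi.sub_apply, Pi.smul_apply,
      smul_eq_mul, Fin.isValue, Matrix.cons_val_zero, Matrix.cons_val_one, Matrix.head_cons,
      Matrix.cons_val_two, Matrix.tail_cons, Matrix.cons_val_three] <;>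
    norm_num <;> ring

lemma eq_cv (X : G) (α β γ δ v0 v1 v2 v3 : ℝ) (h0 : X 0 = v0) (h1 : X 1 = v1)
    (h2 : X 2 = v2) (h3 : X 3 = v3) (e0 : α + β + (γ + δ) * (13 / 256) = v0)
    (e1 : α * (256 / 105) + γ + δ = v1) (e2 : γ + δ = v2) (e3 : γ - δ = v3) :
    X = cv α β γ δ := by
  rw [cv_eq]
  funext i
  fin_cases i <;> simp_all

set_option maxHeartbeats 1600000 in
/-- The nonzero idempotent-type elements (`X·X = 2X`) of the Griess algebra of `U`
are exactly the fifteen listed elements. -/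
theorem idempotents_classification :
    {X : G | X ≠ 0 ∧ gmul X X = (2 : ℝ) • X} =
      {cv 0 1 0 0, cv 0 0 1 0, cv 0 0 0 1,
       cv 1 (-1) 0 0, cv 1 0 (-1) 0, cv 1 0 0 (-1),
       cv 1 0 0 0,
       cv (14 / 9) (-32 / 27) (-32 / 27) (-32 / 27),
       cv (-7 / 18) (14 / 27) (32 / 27) (32 / 27),
       cv (-7 / 18) (32 / 27) (14 / 27) (32 / 27),
       cv (-7 / 18) (32 / 27) (32 / 27) (14 / 27),
       cv (-5 / 9) (32 / 27) (32 / 27) (32 / 27),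
       cv (25 / 18) (-14 / 27) (-32 / 27) (-32 / 27),
       cv (25 / 18) (-32 / 27) (-14 / 27) (-32 / 27),
       cv (25 / 18) (-32 / 27) (-32 / 27) (-14 / 27)} := by
  ext X
  simp only [Set.mem_setOf_eq, Set.mem_insert_iff, Set.mem_singleton_iff]
  constructor
  · rintro ⟨hne, hmul⟩
    have h0 := congrFun hmul 0
    have h1 := congrFun hmul 1
    have h2 := congrFun hmul 2
    have h3 := congrFun hmul 3
    simp only [gmul, Matrix.cons_val_zero, Matrix.cons_val_one, Matrix.head_cons,
      Matrix.cons_val_two, Matrix.tail_cons, Matrix.cons_val_three, Pi.smul_apply,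
      smul_eq_mul] at h0 h1 h2 h3
    have h3f : X 3 * ((1/8) * X 0 + (3255/2048) * X 1 + (207/512) * X 2 - 2) = 0 := by
      linear_combination h3
    rcases mul_eq_zero.mp h3f with hw | hL
    · rw [hw] at h0 h1 h2
      have h2f : X 2 * (X 0 + (315/256) * X 1 - 2) = 0 := by linear_combination h2
      rcases mul_eq_zero.mp h2f with hz | hxe
      · rw [hz] at h0 h1
        have hyf : X 1 * (X 1 - 256/105) = 0 := by linear_combination (128/105) * h1
        have hxf : X 0 * (X 0 - 1) = 0 := by linear_combination (1/2) * h0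
        rcases mul_eq_zero.mp hxf with hx | hx
        · rcases mul_eq_zero.mp hyf with hy | hy
          · exact absurd (funext fun i => by fin_cases i <;> simp [hx, hy, hz, hw]) hne
          · have hy' : X 1 = 256/105 := by linarith
            refine Or.inr (Or.inr (Or.inr (Or.inl ?_)))
            exact eq_cv X 1 (-1) 0 0 _ _ _ _ hx hy' hz hw (by norm_num) (by norm_num) (by norm_num) (by norm_num)
        · have hx' : X 0 = 1 := by linarith
          rcases mul_eq_zero.mp hyf with hy | hy
          ·
            refine Or.inl ?_
            exact eq_cv X 0 1 0 0 _ _ _ _ hx' hy hz hw (by norm_num) (by norm_num) (by norm_num) (by norm_num)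
          · have hy' : X 1 = 256/105 := by linarith
            refine Or.inr (Or.inr (Or.inr (Or.inr (Or.inr (Or.inr (Or.inl ?_))))))
            exact eq_cv X 1 0 0 0 _ _ _ _ hx' hy' hz hw (by norm_num) (by norm_num) (by norm_num) (by norm_num)
      · have hx : X 0 = 2 - (315/256) * X 1 := by linarith
        rw [hx] at h0
        have hy4 : (X 1 - 64/45) * (X 1 - 64/63) = 0 := by
          linear_combination (1024/2835) * h0 - (4/35) * h1
        rcases mul_eq_zero.mp hy4 with hy | hy
        · have hy' : X 1 = (64/45) := by linarith
          rw [hy'] at h1 hx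
          have hx' : X 0 = (1/4) := by rw [hx]; norm_num
          have hz4 : (X 2 - 64/27) * (X 2 + 64/27) = 0 := by linear_combination (128/27) * h1
          rcases mul_eq_zero.mp hz4 with hz | hz
          · have hz' : X 2 = 64/27 := by linarith
            refine Or.inr (Or.inr (Or.inr (Or.inr (Or.inr (Or.inr (Or.inr (Or.inr (Or.inl ?_))))))))
            exact eq_cv X (-7/18) (14/27) (32/27) (32/27) _ _ _ _ hx' hy' hz' hw (by norm_num) (by norm_num) (by norm_num) (by norm_num)
          · have hz' : X 2 = -64/27 := by linarith
            refine Or.inr (Or.inr (Or.inr (Or.inr (Or.inr (Or.inr (Or.inr (Or.inl ?_)))))))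
            exact eq_cv X (14/9) (-32/27) (-32/27) (-32/27) _ _ _ _ hx' hy' hz' hw (by norm_num) (by norm_num) (by norm_num) (by norm_num)
        · have hy' : X 1 = (64/63) := by linarith
          rw [hy'] at h1 hx
          have hx' : X 0 = (3/4) := by rw [hx]; norm_num
          have hz4 : (X 2 - 64/27) * (X 2 + 64/27) = 0 := by linear_combination (128/27) * h1
          rcases mul_eq_zero.mp hz4 with hz | hz
          · have hz' : X 2 = 64/27 := by linarith
            refine Or.inr (Or.inr (Or.inr (Or.inr (Or.inr (Or.inr (Or.inr (Or.inr (Or.inr (Or.inr (Or.inr (Or.inl ?_)))))))))))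
            exact eq_cv X (-5/9) (32/27) (32/27) (32/27) _ _ _ _ hx' hy' hz' hw (by norm_num) (by norm_num) (by norm_num) (by norm_num)
          · have hz' : X 2 = -64/27 := by linarith
            refine Or.inr (Or.inr (Or.inr (Or.inr (Or.inr (Or.inr (Or.inr (Or.inr (Or.inr (Or.inr (Or.inr (Or.inr (Or.inl ?_))))))))))))
            exact eq_cv X (25/18) (-14/27) (-32/27) (-32/27) _ _ _ _ hx' hy' hz' hw (by norm_num) (by norm_num) (by norm_num) (by norm_num)
    · have hx : X 0 = 16 - (3255/256) * X 1 - (207/64) * X 2 := by linarith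
      rw [hx] at h0 h2
      have hQ : (X 1 - 128/105) * X 2 + (4853/1419) * X 1 ^ 2 - (1242368/148995) * X 1
          + 153088/29799 = 0 := by
        linear_combination (4784/446985) * h0 - (39307/794640) * h1 + (13157/198660) * h2
      have hR : (X 1 - 1) * (X 1 - 151/105) * (X 1 - 34/45) * (X 1 - 106/63) = 0 := by
        linear_combination (136051/35721000 + (141427/3175200) * X 2 - (4691/1587600) * X 1
            - (141427/3870720) * X 1 * X 2 + (4691/3870720) * X 1 ^ 2) * h0
          + (221996809/203212800 - (18592211/90316800) * X 2 - (244871399/135475200) * X 1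
            + (18592211/110100480) * X 1 * X 2 + (244871399/330301440) * X 1 ^ 2) * h1
          + (-(53436613/36288000) + (6223261/22579200) * X 2 + (16503029/6773760) * X 1
            - (6223261/27525120) * X 1 * X 2 - (16503029/16515072) * X 1 ^ 2) * h2
      rcases mul_eq_zero.mp hR with hR3 | hy
      rcases mul_eq_zero.mp hR3 with hR2 | hy
      rcases mul_eq_zero.mp hR2 with hy | hy
      · have hy' : X 1 = 1 := by linarith
        rw [hy'] at hQ h1 hx
        have hz' : X 2 = 1 := by linear_combination (-105/23) * hQ
        rw [hz'] at h1 hx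
        have hx' : X 0 = (13/256) := by rw [hx]; norm_num
        have hw4 : (X 3 - 1) * (X 3 + 1) = 0 := by linear_combination (32/31) * h1
        rcases mul_eq_zero.mp hw4 with hw | hw
        · have hw' : X 3 = 1 := by linarith
          refine Or.inr (Or.inl ?_)
          exact eq_cv X 0 0 1 0 _ _ _ _ hx' hy' hz' hw' (by norm_num) (by norm_num) (by norm_num) (by norm_num)
        · have hw' : X 3 = (-1) := by linarith
          refine Or.inr (Or.inr (Or.inl ?_))
          exact eq_cv X 0 0 0 1 _ _ _ _ hx' hy' hz' hw' (by norm_num) (by norm_num) (by norm_num) (by norm_num)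
      · have hy' : X 1 = (151/105) := by linarith
        rw [hy'] at hQ h1 hx
        have hz' : X 2 = (-1) := by linear_combination (105/23) * hQ
        rw [hz'] at h1 hx
        have hx' : X 0 = (243/256) := by rw [hx]; norm_num
        have hw4 : (X 3 - 1) * (X 3 + 1) = 0 := by linear_combination (32/31) * h1
        rcases mul_eq_zero.mp hw4 with hw | hw
        · have hw' : X 3 = 1 := by linarith
          refine Or.inr (Or.inr (Or.inr (Or.inr (Or.inr (Or.inl ?_)))))
          exact eq_cv X 1 0 0 (-1) _ _ _ _ hx' hy' hz' hw' (by norm_num) (by norm_num) (by norm_num) (by norm_num)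
        · have hw' : X 3 = (-1) := by linarith
          refine Or.inr (Or.inr (Or.inr (Or.inr (Or.inl ?_))))
          exact eq_cv X 1 0 (-1) 0 _ _ _ _ hx' hy' hz' hw' (by norm_num) (by norm_num) (by norm_num) (by norm_num)
      · have hy' : X 1 = (34/45) := by linarith
        rw [hy'] at hQ h1 hx
        have hz' : X 2 = (46/27) := by linear_combination (-315/146) * hQ
        rw [hz'] at h1 hx
        have hx' : X 0 = (113/128) := by rw [hx]; norm_num
        have hw4 : (X 3 - (2/3)) * (X 3 + (2/3)) = 0 := by linear_combination (32/31) * h1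
        rcases mul_eq_zero.mp hw4 with hw | hw
        · have hw' : X 3 = (2/3) := by linarith
          refine Or.inr (Or.inr (Or.inr (Or.inr (Or.inr (Or.inr (Or.inr (Or.inr (Or.inr (Or.inr (Or.inl ?_))))))))))
          exact eq_cv X (-7/18) (32/27) (32/27) (14/27) _ _ _ _ hx' hy' hz' hw' (by norm_num) (by norm_num) (by norm_num) (by norm_num)
        · have hw' : X 3 = (-2/3) := by linarith
          refine Or.inr (Or.inr (Or.inr (Or.inr (Or.inr (Or.inr (Or.inr (Or.inr (Or.inr (Or.inl ?_)))))))))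
          exact eq_cv X (-7/18) (32/27) (14/27) (32/27) _ _ _ _ hx' hy' hz' hw' (by norm_num) (by norm_num) (by norm_num) (by norm_num)
      have hy' : X 1 = (106/63) := by linarith
      rw [hy'] at hQ h1 hx
      have hz' : X 2 = (-46/27) := by linear_combination (315/146) * hQ
      rw [hz'] at h1 hx
      have hx' : X 0 = (15/128) := by rw [hx]; norm_num
      have hw4 : (X 3 - (2/3)) * (X 3 + (2/3)) = 0 := by linear_combination (32/31) * h1
      rcases mul_eq_zero.mp hw4 with hw | hw
      · have hw' : X 3 = (2/3) := by linarith
        refine Or.inr (Or.inr (Or.inr (Or.inr (Or.inr (Or.inr (Or.inr (Or.inr (Or.inr (Or.inr (Or.inr (Or.inr (Or.inr (Or.inl ?_)))))))))))))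
        exact eq_cv X (25/18) (-32/27) (-14/27) (-32/27) _ _ _ _ hx' hy' hz' hw' (by norm_num) (by norm_num) (by norm_num) (by norm_num)
      · have hw' : X 3 = (-2/3) := by linarith
        refine Or.inr (Or.inr (Or.inr (Or.inr (Or.inr (Or.inr (Or.inr (Or.inr (Or.inr (Or.inr (Or.inr (Or.inr (Or.inr (Or.inr (?_))))))))))))))
        exact eq_cv X (25/18) (-32/27) (-32/27) (-14/27) _ _ _ _ hx' hy' hz' hw' (by norm_num) (by norm_num) (by norm_num) (by norm_num)
  · intro hmem
    rcases hmem with rfl|rfl|rfl|rfl|rfl|rfl|rfl|rfl|rfl|rfl|rfl|rfl|rfl|rfl|rfl <;>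
      exact ⟨by
          rw [cv_eq]; intro h
          have c0 := congrFun h 0
          have c1 := congrFun h 1
          revert c0 c1; norm_num,
        by rw [cv_eq]; funext i; fin_cases i <;> simp [gmul] <;> norm_num⟩
end
end

section
/- For every nonzero element X of the Griess algebra G with X·X = 2X, the central charge 2⟨X,X⟩ of X lies in the set {1/2, 81/70, 58/35, 4/5, 6/7}. -/
noncomputable section

set_option maxHeartbeats 2000000 in
/-- The possible central charges of conformal vectors in the Griess algebra of `U`
are `1/2`, `81/70`, `58/35`, `4/5` and `6/7`. -/
theorem central_charges (X : G) (hX : X ≠ 0) (h : gmul X X = (2 : ℝ) • X) :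
    2 * form X X ∈ ({1 / 2, 81 / 70, 58 / 35, 4 / 5, 6 / 7} : Set ℝ) := by
  have h0 : 2 * X 0 * X 0 + (3 ^ 7 / 2 ^ 15) * X 2 * X 2 + (3 ^ 5 / 2 ^ 13) * X 3 * X 3 = 2 * X 0 := by
    have := congrFun h 0; simpa [gmul] using this
  have h1 : (105 / 2 ^ 7) * X 1 * X 1 + (3 ^ 3 / 2 ^ 7) * X 2 * X 2 + (31 / 2 ^ 5) * X 3 * X 3 = 2 * X 1 := by
    have := congrFun h 1; simpa [gmul] using this
  have h2 : (1 / 2) * (X 0 * X 2 + X 2 * X 0) + (3 ^ 2 * 5 * 7 / 2 ^ 9) * (X 1 * X 2 + X 2 * X 1)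
      + (23 / 2 ^ 5) * X 3 * X 3 = 2 * X 2 := by
    have := congrFun h 2; simpa [gmul] using this
  have h3 : (1 / 16) * (X 0 * X 3 + X 3 * X 0) + (31 * 105 / 2 ^ 12) * (X 1 * X 3 + X 3 * X 1)
      + (3 ^ 2 * 23 / 2 ^ 10) * (X 2 * X 3 + X 3 * X 2) = 2 * X 3 := by
    have := congrFun h 3; simpa [gmul] using this
  simp only [Set.mem_insert_iff, Set.mem_singleton_iff]
  rcases mul_eq_zero.mp (show X 3 * ((1/8) * X 0 + (3255/2048) * X 1 + (207/512) * X 2 - 2) = 0 by linear_combination h3) with hw | hL3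
  · -- w = 0
    rcases mul_eq_zero.mp (show X 2 * (X 0 + (315/256) * X 1 - 2) = 0 by linear_combination h2 + ((-23/32) * X 3) * hw) with hz | hL2
    · -- z = 0
      rcases mul_eq_zero.mp (show X 0 * (X 0 - 1) = 0 by linear_combination ((1/2)) * h0 + ((-2187/65536) * X 2) * hz + ((-243/16384) * X 3) * hw) with hx | hx1
      · rcases mul_eq_zero.mp (show X 1 * ((105/128) * X 1 - 2) = 0 by linear_combination h1 + ((-27/128) * X 2) * hz + ((-31/32) * X 3) * hw) with hy | hy1
        · exact absurd (funext fun i => by fin_cases i <;> simpa) hX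
        · have hy : X 1 = 256/105 := by linarith
          refine Or.inr (Or.inl ?_)
          show 2 * form X X = 81 / 70
          simp only [form]
          linear_combination ((1/2) * X 0) * hx + ((243/512) + (25515/131072) * X 1) * hy + ((2187/32768) * X 2) * hz + ((243/1024) * X 3) * hw
      · have hx : X 0 = 1 := by linarith [sub_eq_zero.mp hx1]
        rcases mul_eq_zero.mp (show X 1 * ((105/128) * X 1 - 2) = 0 by linear_combination h1 + ((-27/128) * X 2) * hz + ((-31/32) * X 3) * hw) with hy | hy1
        · -- y = 0
          refine Or.inl ?_
          show 2 * form X X = 1 / 2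
          simp only [form]
          linear_combination ((1/2) + (1/2) * X 0) * hx + ((25515/131072) * X 1) * hy + ((2187/32768) * X 2) * hz + ((243/1024) * X 3) * hw
        · have hy : X 1 = 256/105 := by linarith
          refine Or.inr (Or.inr (Or.inl ?_))
          show 2 * form X X = 58 / 35
          simp only [form]
          linear_combination ((1/2) + (1/2) * X 0) * hx + ((243/512) + (25515/131072) * X 1) * hy + ((2187/32768) * X 2) * hz + ((243/1024) * X 3) * hw
    · -- x = 2 - (315/256) y, w = 0
      rcases mul_eq_zero.mp (show ((315/256) * X 1 - 7/4) * ((315/256) * X 1 - 5/4) = 0 by linear_combination ((-2835/16384)) * h1 + ((35/64)) * h0 + ((-35/32) + (11025/8192) * X 1 + (-35/32) * X 0) * hL2 + ((19845/131072) * X 3) * hw) with hy1 | hy1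
      · have hy : X 1 = (64/45) := by linarith
        have hx : X 0 = (1/4) := by linarith
        have hzz : X 2 * X 2 = (4096/729) := by linear_combination ((32768/2187)) * h0 + ((16384/729) + (-65536/2187) * X 0) * hx + ((-4/9) * X 3) * hw
        refine Or.inr (Or.inr (Or.inr (Or.inl ?_)))
        show 2 * form X X = 4 / 5
        simp only [form]
        linear_combination ((1/8) + (1/2) * X 0) * hx + ((567/2048) + (25515/131072) * X 1) * hy + ((2187/32768)) * hzz + ((243/1024) * X 3) * hw
      · have hy : X 1 = (64/63) := by linarith
        have hx : X 0 = (3/4) := by linarith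
        have hzz : X 2 * X 2 = (4096/729) := by linear_combination ((32768/2187)) * h0 + ((16384/2187) + (-65536/2187) * X 0) * hx + ((-4/9) * X 3) * hw
        refine Or.inr (Or.inr (Or.inr (Or.inr ?_)))
        show 2 * form X X = 6 / 7
        simp only [form]
        linear_combination ((3/8) + (1/2) * X 0) * hx + ((405/2048) + (25515/131072) * X 1) * hy + ((2187/32768)) * hzz + ((243/1024) * X 3) * hw
  · -- conformal vectors with w-component
    have hx : X 0 = 16 - (3255/256) * X 1 - (207/64) * X 2 := by linarith
    have hw2 : X 3 * X 3 = (-448/23) * X 2 + (9/2) * X 2 * X 2 + (735/46) * X 1 * X 2 := by linear_combination ((32/23)) * h2 + ((-32/23) * X 2) * hx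
    have hq : (X 1 - 1) * (X 1 - (106/63)) * (X 1 - (34/45)) * (X 1 - (151/105)) = 0 := by
      linear_combination ((136051/35721000) + (141427/3175200) * X 2 + (-4691/1587600) * X 1 + (-141427/3870720) * X 1 * X 2 + (4691/3870720) * X 1 * X 1) * h0 + ((221996809/203212800) + (-18592211/90316800) * X 2 + (-244871399/135475200) * X 1 + (18592211/110100480) * X 1 * X 2 + (244871399/330301440) * X 1 * X 1) * h1 + ((-136051/1190700) + (-166583227/127008000) * X 2 + (3252821/11289600) * X 2 * X 2 + (56543227/304819200) * X 1 + (299357213/135475200) * X 1 * X 2 + (-3252821/13762560) * X 1 * X 2 * X 2 + (-107893/967680) * X 1 * X 1 + (-152153579/165150720) * X 1 * X 1 * X 2 + (145421/4718592) * X 1 * X 1 * X 1 + (-136051/17860500) * X 0 + (-141427/1587600) * X 0 * X 2 + (4691/793800) * X 0 * X 1 + (141427/1935360) * X 0 * X 1 * X 2 + (-4691/1935360) * X 0 * X 1 * X 1) * hx + ((-1229042099/1161216000) + (143135003/722534400) * X 2 + (379569667/216760320) * X 1 + (-143135003/880803840) * X 1 * X 2 + (-379569667/528482304) * X 1 * X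 1) * hw2
    rcases mul_eq_zero.mp hq with hq' | hy4
    rcases mul_eq_zero.mp hq' with hq'' | hy3
    rcases mul_eq_zero.mp hq'' with hy1 | hy2
    · have hy : X 1 = 1 := by linarith [sub_eq_zero.mp hy1]
      have hz : X 2 = 1 := by linear_combination ((-208/4257)) * h0 + ((1709/7568)) * h1 + ((2080/1419) + (-299/946) * X 2 + (-14105/11352) * X 1 + (416/4257) * X 0) * hx + ((-13157/60544)) * hw2 + ((-31861/1419) + (105/23) * X 2 + (7385/473) * X 1) * hy
      have hx0 : X 0 = (13/256) := by rw [hy, hz] at hx; norm_num at hx; linarith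
      have hww : X 3 * X 3 = 1 := by linear_combination hw2 + ((735/46) * X 2) * hy + (1 + (9/2) * X 2) * hz
      refine Or.inl ?_
      show 2 * form X X = 1 / 2
      simp only [form]
      linear_combination ((13/512) + (1/2) * X 0) * hx0 + ((25515/131072) + (25515/131072) * X 1) * hy + ((2187/32768) + (2187/32768) * X 2) * hz + ((243/1024)) * hww
    · have hy : X 1 = (106/63) := by linarith [sub_eq_zero.mp hy2]
      have hz : X 2 = (-46/27) := by linear_combination ((2392/103587)) * h0 + ((-117921/1104928)) * h1 + ((-23920/34529) + (20631/138116) * X 2 + (324415/552464) * X 1 + (-4784/103587) * X 0) * hx + ((907833/8839424)) * hw2 + ((577507/103587) + (-315/146) * X 2 + (-509565/69058) * X 1) * hy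
      have hx0 : X 0 = (15/128) := by rw [hy, hz] at hx; norm_num at hx; linarith
      have hww : X 3 * X 3 = (4/9) := by linear_combination hw2 + ((735/46) * X 2) * hy + ((-6/23) + (9/2) * X 2) * hz
      refine Or.inr (Or.inr (Or.inr (Or.inr ?_)))
      show 2 * form X X = 6 / 7
      simp only [form]
      linear_combination ((15/256) + (1/2) * X 0) * hx0 + ((21465/65536) + (25515/131072) * X 1) * hy + ((-1863/16384) + (2187/32768) * X 2) * hz + ((243/1024)) * hww
    · have hy : X 1 = (34/45) := by linarith [sub_eq_zero.mp hy3]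
      have hz : X 2 = (46/27) := by linear_combination ((-2392/103587)) * h0 + ((117921/1104928)) * h1 + ((23920/34529) + (-20631/138116) * X 2 + (-324415/552464) * X 1 + (4784/103587) * X 0) * hx + ((-907833/8839424)) * hw2 + ((-1286045/103587) + (315/146) * X 2 + (509565/69058) * X 1) * hy
      have hx0 : X 0 = (113/128) := by rw [hy, hz] at hx; norm_num at hx; linarith
      have hww : X 3 * X 3 = (4/9) := by linear_combination hw2 + ((735/46) * X 2) * hy + ((6/23) + (9/2) * X 2) * hz
      refine Or.inr (Or.inr (Or.inr (Or.inl ?_)))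
      show 2 * form X X = 4 / 5
      simp only [form]
      linear_combination ((113/256) + (1/2) * X 0) * hx0 + ((9639/65536) + (25515/131072) * X 1) * hy + ((1863/16384) + (2187/32768) * X 2) * hz + ((243/1024)) * hww
    · have hy : X 1 = (151/105) := by linarith [sub_eq_zero.mp hy4]
      have hz : X 2 = (-1) := by linear_combination ((208/4257)) * h0 + ((-1709/7568)) * h1 + ((-2080/1419) + (299/946) * X 2 + (14105/11352) * X 1 + (-416/4257) * X 0) * hx + ((13157/60544)) * hw2 + ((7385/473) + (-105/23) * X 2 + (-7385/473) * X 1) * hy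
      have hx0 : X 0 = (243/256) := by rw [hy, hz] at hx; norm_num at hx; linarith
      have hww : X 3 * X 3 = 1 := by linear_combination hw2 + ((735/46) * X 2) * hy + ((-1) + (9/2) * X 2) * hz
      refine Or.inr (Or.inl ?_)
      show 2 * form X X = 81 / 70
      simp only [form]
      linear_combination ((243/512) + (1/2) * X 0) * hx0 + ((36693/131072) + (25515/131072) * X 1) * hy + ((-2187/32768) + (2187/32768) * X 2) * hz + ((243/1024)) * hww
end
end

section
/- In the Griess algebra G, the elements ω³ := (14/9)ω − (32/27)(e+f+f') and ω⁴ := (−5/9)ω + (32/27)(e+f+f') satisfy ω³ + ω⁴ = ω, ω³·ω³ = 2ω³, ω⁴·ω⁴ = 2ω⁴, ω³·ω⁴ = 0, ⟨ω³,ω⁴⟩ = 0, ⟨ω³,ω³⟩ = 2/5 and ⟨ω⁴,ω⁴⟩ = 3/7. In other words, the Virasoro vector ω decomposes as an orthogonal sum of two mutually commutative conformal vectors of central charges 4/5 and 6/7 (the characteristic decomposition of ω in U). -/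
noncomputable section

/-- The conformal vector `ω³` of central charge `4/5`. -/
def ω3 : G := (14 / 9 : ℝ) • ω - (32 / 27 : ℝ) • (e + f + f')

/-- The conformal vector `ω⁴` of central charge `6/7`. -/
def ω4 : G := (-5 / 9 : ℝ) • ω + (32 / 27 : ℝ) • (e + f + f')

/-- The characteristic decomposition `ω = ω³ + ω⁴` of the Virasoro vector of `U`
into an orthogonal sum of mutually commutative conformal vectors of central
charges `4/5` and `6/7`. -/
theorem characteristic_decomposition :
    ω3 + ω4 = ω ∧
    gmul ω3 ω3 = (2 : ℝ) • ω3 ∧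
    gmul ω4 ω4 = (2 : ℝ) • ω4 ∧
    gmul ω3 ω4 = 0 ∧
    form ω3 ω4 = 0 ∧
    form ω3 ω3 = 2 / 5 ∧
    form ω4 ω4 = 3 / 7 := by
  have h3 : ω3 = ![1/4, 64/45, -64/27, 0] := by
    funext i
    fin_cases i <;>
      simp [ω3, ω, e, a, b, c, f, f', Pi.add_apply, Pi.sub_apply, Pi.smul_apply] <;> norm_num
  have h4 : ω4 = ![3/4, 64/63, 64/27, 0] := by
    funext i
    fin_cases i <;>
      simp [ω4, ω, e, a, b, c, f, f', Pi.add_apply, Pi.sub_apply, Pi.smul_apply] <;> norm_num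
  refine ⟨?_, ?_, ?_, ?_, ?_, ?_, ?_⟩
  · funext i
    fin_cases i <;>
      simp [ω3, ω4, ω, e, a, b, c, f, f', Pi.add_apply, Pi.sub_apply, Pi.smul_apply] <;> norm_num
  · rw [h3]; funext i; fin_cases i <;> simp [gmul] <;> norm_num
  · rw [h4]; funext i; fin_cases i <;> simp [gmul] <;> norm_num
  · rw [h3, h4]; funext i; fin_cases i <;> simp [gmul] <;> norm_num
  · rw [h3, h4]; simp [form]; norm_num
  · rw [h3]; simp [form]; norm_num
  · rw [h4]; simp [form]; norm_num
end
end

section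
/- The smallest ℝ-linear subspace of the Griess algebra G that contains the two elements e and f and is closed under the product · is G itself. That is, the 4-dimensional Griess algebra of U is generated by the two conformal vectors e and f. -/
noncomputable section

/-- The Griess algebra of `U` is generated by the two conformal vectors `e` and `f`:
any linear subspace containing `e` and `f` and closed under the product is everything. -/
theorem griess_generated_by_e_f (S : Submodule ℝ G) (he : e ∈ S) (hf : f ∈ S)
    (hmul : ∀ x ∈ S, ∀ y ∈ S, gmul x y ∈ S) : S = ⊤ := by
  have hef : gmul e f ∈ S := hmul e he f hf
  have heef : gmul e (gmul e f) ∈ S := hmul e he _ hef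
  have hb : b ∈ S := by
    have hval : b = (-2/7 : ℝ) • (gmul e f) + (32/7 : ℝ) • (gmul e (gmul e f))
        + ((-2/7) * (-(13/2^7)) + (32/7) * (-(13/2^6)) : ℝ) • e := by
      funext i; fin_cases i <;>
        simp [gmul, e, f, a, b, c, Matrix.cons_val_zero, Matrix.cons_val_one] <;> norm_num
    rw [hval]
    exact S.add_mem (S.add_mem (S.smul_mem _ hef) (S.smul_mem _ heef)) (S.smul_mem _ he)
  have hc : c ∈ S := by
    have hval : c = (128/7 : ℝ) • (gmul e f) + (-256/7 : ℝ) • (gmul e (gmul e f))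
        + ((128/7) * (-(13/2^7)) + (-256/7) * (-(13/2^6)) : ℝ) • e := by
      funext i; fin_cases i <;>
        simp [gmul, e, f, a, b, c, Matrix.cons_val_zero, Matrix.cons_val_one] <;> norm_num
    rw [hval]
    exact S.add_mem (S.add_mem (S.smul_mem _ hef) (S.smul_mem _ heef)) (S.smul_mem _ he)
  have ha : a ∈ S := by
    have hval : a = f + (-(13/2^8) : ℝ) • e + (-1 : ℝ) • b + (-1 : ℝ) • c := by
      funext i; fin_cases i <;> simp [e, f, a, b, c] <;> norm_num
    rw [hval]
    exact S.add_mem (S.add_mem (S.add_mem hf (S.smul_mem _ he)) (S.smul_mem _ hb)) (S.smul_mem _ hc)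
  rw [eq_top_iff]
  intro x _
  have hx : x = x 0 • e + x 1 • a + x 2 • b + x 3 • c := by
    funext i; fin_cases i <;> simp [e, a, b, c]
  rw [hx]
  exact S.add_mem (S.add_mem (S.add_mem (S.smul_mem _ he) (S.smul_mem _ ha)) (S.smul_mem _ hb)) (S.smul_mem _ hc)
end
end

section
/- In the Griess algebra G, the elements f := (13/2^8)e + a + b + c and f' := (13/2^8)e + a + b − c satisfy f·f = 2f, f'·f' = 2f', and ⟨f,f⟩ = ⟨f',f'⟩ = 1/4. Hence e, f and f' are all conformal vectors of central charge 1/2 of G. -/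
noncomputable section

/-- `f` and `f'` are conformal vectors of central charge `1/2` in the Griess
algebra of `U`. -/
theorem f_f'_conformal :
    gmul f f = (2 : ℝ) • f ∧ gmul f' f' = (2 : ℝ) • f' ∧
    form f f = 1 / 4 ∧ form f' f' = 1 / 4 := by
  refine ⟨?_, ?_, ?_, ?_⟩
  · funext i; fin_cases i <;>
      simp [gmul, f, e, a, b, c, Matrix.cons_val_zero, Matrix.cons_val_one] <;> norm_num
  · funext i; fin_cases i <;>
      simp [gmul, f', e, a, b, c] <;> norm_num
  · simp [form, f, e, a, b, c] <;> norm_num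
  · simp [form, f', e, a, b, c] <;> norm_num
end
end
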